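/- arXiv:1409.0424 — 6 statements merged into one kernel-verified Lean document; each statement's English description precedes it below -/
import Mathlib

section
/- Let (M, ρ, μ) be a doubling metric measure space with dimension d. Then for every σ > d there is a constant c > 0 such that for all x, y ∈ M and t > 0, ∫_M (1 + ρ(x,u)/t)^{-σ} (1 + ρ(u,y)/t)^{-σ} dμ(u) ≤ c μ(B(x,t)) (1 + ρ(x,y)/t)^{-σ+d}. -/
/-!
For `s ≤ a + b` the larger of `1 + a`, `1 + b` is at least `(1 + s) / 2`, so
`(1+a)^{-σ} (1+b)^{-σ} ≤ 2^σ (1+s)^{-σ} ((1+a)^{-σ} + (1+b)^{-σ})`: with `s = ρ(x,y)/t` the product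
kernel splits into two single kernels. The single kernel centred at `z` is dominated by
`∑ₙ 2^{-σn} 1_{B(z, 2ⁿ⁺¹t)}`, whose integral is at most `∑ₙ 2^{-σn} c₀ⁿ⁺¹ μ(B(z,t))`, a geometric
series that converges exactly because `σ > d`, i.e. `c₀ 2^{-σ} < 1`. Finally the ball around `y`
is moved to `x`: `B(y,t) ⊆ B(x, 2ⁿ⁺¹t)` where `2ⁿ ≤ 1 + ρ(x,y)/t`, so
`μ(B(y,t)) ≤ c₀ⁿ⁺¹ μ(B(x,t)) ≤ c₀ (1 + ρ(x,y)/t)^d μ(B(x,t))`.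
-/

open MeasureTheory Metric Set

open scoped ENNReal

lemma rpow_neg_le_pow_of_two_pow_le {σ s : ℝ} (hσ : 0 ≤ σ) {n : ℕ} (h : 2 ^ n ≤ s) :
    s ^ (-σ) ≤ ((2 : ℝ) ^ (-σ)) ^ n := by
  rw [Real.rpow_pow_comm zero_le_two]
  exact Real.rpow_le_rpow_of_nonpos (by positivity) h (neg_nonpos.2 hσ)

lemma rpow_neg_mul_rpow_neg_le {a b s σ : ℝ} (hσ : 0 ≤ σ) (ha : 0 ≤ a) (hb : 0 ≤ b)
    (hs : 0 ≤ s) (hsab : s ≤ a + b) :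
    (1 + a) ^ (-σ) * (1 + b) ^ (-σ) ≤
      2 ^ σ * (1 + s) ^ (-σ) * ((1 + a) ^ (-σ) + (1 + b) ^ (-σ)) := by
  wlog hab : a ≤ b generalizing a b
  · rw [mul_comm ((1 + a) ^ (-σ)), add_comm ((1 + a) ^ (-σ))]
    exact this hb ha (by linarith) (le_of_not_ge hab)
  have hb_large : (1 + b) ^ (-σ) ≤ 2 ^ σ * (1 + s) ^ (-σ) :=
    calc (1 + b) ^ (-σ) ≤ ((1 + s) / 2) ^ (-σ) :=
          Real.rpow_le_rpow_of_nonpos (by positivity) (by linarith) (neg_nonpos.2 hσ)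
      _ = 2 ^ σ * (1 + s) ^ (-σ) := by
          rw [Real.div_rpow (by positivity) zero_le_two, Real.rpow_neg zero_le_two,
            div_inv_eq_mul, mul_comm]
  calc (1 + a) ^ (-σ) * (1 + b) ^ (-σ) ≤ (1 + a) ^ (-σ) * (2 ^ σ * (1 + s) ^ (-σ)) := by
        gcongr
    _ ≤ 2 ^ σ * (1 + s) ^ (-σ) * ((1 + a) ^ (-σ) + (1 + b) ^ (-σ)) := by
        rw [mul_comm]
        gcongr
        exact le_add_of_nonneg_right (by positivity)

lemma integral_le_toReal_lintegral_ofReal {α : Type*} [MeasurableSpace α]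
    {μ : Measure α} {f : α → ℝ} (hf : 0 ≤ f) :
    ∫ a, f a ∂μ ≤ (∫⁻ a, ENNReal.ofReal (f a) ∂μ).toReal := by
  simpa only [Real.norm_of_nonneg (hf _)] using
    (le_abs_self _).trans (norm_integral_le_lintegral_norm f)

noncomputable def decayConst (C : ℝ≥0∞) (σ : ℝ) : ℝ≥0∞ :=
  C * (1 - ENNReal.ofReal (2 ^ (-σ)) * C)⁻¹

lemma decayConst_ne_zero {C : ℝ≥0∞} (hC : C ≠ 0) (σ : ℝ) : decayConst C σ ≠ 0 :=
  mul_ne_zero hC (ENNReal.inv_ne_zero.2 (ENNReal.sub_ne_top ENNReal.one_ne_top))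

lemma decayConst_ofReal_ne_top {c₀ σ : ℝ} (hc₀ : 0 < c₀) (hσ : Real.logb 2 c₀ < σ) :
    decayConst (ENNReal.ofReal c₀) σ ≠ ⊤ := by
  have hlt : ENNReal.ofReal (2 ^ (-σ)) * ENNReal.ofReal c₀ < 1 := by
    rw [← ENNReal.ofReal_mul (by positivity), ENNReal.ofReal_lt_one, Real.rpow_neg zero_le_two,
      inv_mul_lt_one₀ (by positivity)]
    exact (Real.logb_lt_iff_lt_rpow one_lt_two hc₀).1 hσ
  exact ENNReal.mul_ne_top ENNReal.ofReal_ne_top (ENNReal.inv_ne_top.2 (tsub_pos_of_lt hlt).ne')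

section Doubling

variable {M : Type*} [PseudoMetricSpace M] [MeasurableSpace M] {μ : Measure M}

def IsBallDoubling (μ : Measure M) (C : ℝ≥0∞) : Prop :=
  ∀ (x : M) (r : ℝ), 0 < r → μ (ball x (2 * r)) ≤ C * μ (ball x r)

lemma isBallDoubling_ofReal {c₀ : ℝ} (hc₀ : 0 ≤ c₀)
    (hfin : ∀ (x : M) (r : ℝ), 0 < r → μ (ball x r) < ⊤)
    (hdbl : ∀ (x : M) (r : ℝ), 0 < r →
      (μ (ball x (2 * r))).toReal ≤ c₀ * (μ (ball x r)).toReal) :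
    IsBallDoubling μ (ENNReal.ofReal c₀) := by
  intro x r hr
  rw [← ENNReal.ofReal_toReal (hfin x _ (by positivity)).ne,
    ← ENNReal.ofReal_toReal (hfin x r hr).ne, ← ENNReal.ofReal_mul hc₀]
  exact ENNReal.ofReal_le_ofReal (hdbl x r hr)

lemma IsBallDoubling.measure_ball_two_pow_mul_le {C : ℝ≥0∞} (hdbl : IsBallDoubling μ C)
    (x : M) {t : ℝ} (ht : 0 < t) (k : ℕ) :
    μ (ball x (2 ^ k * t)) ≤ C ^ k * μ (ball x t) := by
  induction k with
  | zero => simp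
  | succ k ih =>
    calc μ (ball x (2 ^ (k + 1) * t)) = μ (ball x (2 * (2 ^ k * t))) := by ring_nf
      _ ≤ C * μ (ball x (2 ^ k * t)) := hdbl x _ (by positivity)
      _ ≤ C * (C ^ k * μ (ball x t)) := by gcongr
      _ = C ^ (k + 1) * μ (ball x t) := by ring

lemma IsBallDoubling.toReal_measure_ball_le {c₀ : ℝ} (hc₀ : 1 ≤ c₀)
    (hdbl : IsBallDoubling μ (ENNReal.ofReal c₀))
    (x y : M) {t : ℝ} (ht : 0 < t) (hx : μ (ball x t) ≠ ⊤) :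
    (μ (ball y t)).toReal ≤
      c₀ * (1 + dist x y / t) ^ Real.logb 2 c₀ * (μ (ball x t)).toReal := by
  obtain ⟨n, hn, hn'⟩ :=
    exists_nat_pow_near (le_add_of_nonneg_right (by positivity : 0 ≤ dist x y / t)) one_lt_two
  have hsub : ball y t ⊆ ball x (2 ^ (n + 1) * t) := by
    refine ball_subset_ball' ?_
    calc t + dist y x = (1 + dist x y / t) * t := by rw [dist_comm]; field_simp
      _ ≤ 2 ^ (n + 1) * t := by gcongr
  have hpow : c₀ ^ (n + 1) ≤ c₀ * (1 + dist x y / t) ^ Real.logb 2 c₀ := by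
    calc c₀ ^ (n + 1) = c₀ * ((2 : ℝ) ^ n) ^ Real.logb 2 c₀ := by
          rw [pow_succ', ← Real.rpow_pow_comm zero_le_two,
            Real.rpow_logb two_pos (by norm_num) (by linarith)]
      _ ≤ c₀ * (1 + dist x y / t) ^ Real.logb 2 c₀ := by
          gcongr
          exact Real.logb_nonneg one_lt_two hc₀
  have hmeas : μ (ball y t) ≤ ENNReal.ofReal c₀ ^ (n + 1) * μ (ball x t) :=
    (measure_mono hsub).trans (hdbl.measure_ball_two_pow_mul_le x ht _)
  calc (μ (ball y t)).toReal ≤ c₀ ^ (n + 1) * (μ (ball x t)).toReal := by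
        simpa [ENNReal.toReal_mul, ENNReal.toReal_ofReal (by linarith : 0 ≤ c₀)] using
          ENNReal.toReal_mono (by finiteness) hmeas
    _ ≤ _ := by gcongr

/-- Balls need not be measurable, so the kernel `u ↦ (1 + dist x u / t) ^ (-σ)` is dominated by
this measurable step function built from the measurable hulls of the balls `B(x, 2ⁿ⁺¹ t)`. -/
noncomputable def decayMajorant (μ : Measure M) (σ t : ℝ) (x : M) : M → ℝ≥0∞ := fun u ↦
  ∑' n : ℕ, (toMeasurable μ (ball x (2 ^ (n + 1) * t))).indicator
    (fun _ ↦ ENNReal.ofReal (2 ^ (-σ)) ^ n) u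

lemma measurable_decayMajorant (μ : Measure M) (σ t : ℝ) (x : M) :
    Measurable (decayMajorant μ σ t x) :=
  Measurable.tsum fun _ ↦ measurable_const.indicator (measurableSet_toMeasurable _ _)

lemma ofReal_rpow_neg_le_decayMajorant {σ t : ℝ} (hσ : 0 ≤ σ) (ht : 0 < t) (x u : M) :
    ENNReal.ofReal ((1 + dist x u / t) ^ (-σ)) ≤ decayMajorant μ σ t x u := by
  obtain ⟨n, hn, hn'⟩ :=
    exists_nat_pow_near (le_add_of_nonneg_right (by positivity : 0 ≤ dist x u / t)) one_lt_two
  have hu : u ∈ toMeasurable μ (ball x (2 ^ (n + 1) * t)) := by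
    refine subset_toMeasurable _ _ (mem_ball'.2 ?_)
    calc dist x u < (1 + dist x u / t) * t := by field_simp; linarith
      _ < 2 ^ (n + 1) * t := by gcongr
  calc ENNReal.ofReal ((1 + dist x u / t) ^ (-σ)) ≤ ENNReal.ofReal (2 ^ (-σ)) ^ n := by
        rw [← ENNReal.ofReal_pow (by positivity)]
        exact ENNReal.ofReal_le_ofReal (rpow_neg_le_pow_of_two_pow_le hσ hn)
    _ = (toMeasurable μ (ball x (2 ^ (n + 1) * t))).indicator
          (fun _ ↦ ENNReal.ofReal (2 ^ (-σ)) ^ n) u := (indicator_of_mem hu (fun _ ↦ _)).symm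
    _ ≤ decayMajorant μ σ t x u := ENNReal.le_tsum n

lemma IsBallDoubling.lintegral_decayMajorant_le {C : ℝ≥0∞} (hdbl : IsBallDoubling μ C)
    (σ : ℝ) {t : ℝ} (ht : 0 < t) (x : M) :
    ∫⁻ u, decayMajorant μ σ t x u ∂μ ≤ decayConst C σ * μ (ball x t) := by
  set q := ENNReal.ofReal (2 ^ (-σ))
  calc ∫⁻ u, decayMajorant μ σ t x u ∂μ
      = ∑' n : ℕ, q ^ n * μ (ball x (2 ^ (n + 1) * t)) := by
        unfold decayMajorant
        rw [lintegral_tsum fun n ↦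
          (measurable_const.indicator (measurableSet_toMeasurable _ _)).aemeasurable]
        simp_rw [lintegral_indicator_const (measurableSet_toMeasurable _ _),
          measure_toMeasurable, q]
    _ ≤ ∑' n : ℕ, (q * C) ^ n * (C * μ (ball x t)) := by
        refine ENNReal.tsum_le_tsum fun n ↦ ?_
        calc q ^ n * μ (ball x (2 ^ (n + 1) * t)) ≤ q ^ n * (C ^ (n + 1) * μ (ball x t)) := by
              gcongr
              exact hdbl.measure_ball_two_pow_mul_le x ht _
          _ = (q * C) ^ n * (C * μ (ball x t)) := by ring
    _ = decayConst C σ * μ (ball x t) := by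
        rw [ENNReal.tsum_mul_right, ENNReal.tsum_geometric, decayConst]
        ring

lemma IsBallDoubling.lintegral_decay_mul_decay_le {C : ℝ≥0∞} (hdbl : IsBallDoubling μ C)
    {σ t : ℝ} (hσ : 0 ≤ σ) (ht : 0 < t) (x y : M) :
    ∫⁻ u, ENNReal.ofReal ((1 + dist x u / t) ^ (-σ) * (1 + dist u y / t) ^ (-σ)) ∂μ ≤
      ENNReal.ofReal (2 ^ σ * (1 + dist x y / t) ^ (-σ)) *
        (decayConst C σ * (μ (ball x t) + μ (ball y t))) := by
  set K := ENNReal.ofReal (2 ^ σ * (1 + dist x y / t) ^ (-σ))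
  calc ∫⁻ u, ENNReal.ofReal ((1 + dist x u / t) ^ (-σ) * (1 + dist u y / t) ^ (-σ)) ∂μ
      ≤ ∫⁻ u, K * (decayMajorant μ σ t x u + decayMajorant μ σ t y u) ∂μ := by
        refine lintegral_mono fun u ↦ ?_
        have hsplit := rpow_neg_mul_rpow_neg_le hσ (by positivity : 0 ≤ dist x u / t)
          (by positivity : 0 ≤ dist u y / t) (by positivity : 0 ≤ dist x y / t)
          (by rw [← add_div]; gcongr; exact dist_triangle x u y)
        grw [ENNReal.ofReal_le_ofReal hsplit, ENNReal.ofReal_mul (by positivity),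
          ENNReal.ofReal_add (by positivity) (by positivity),
          ofReal_rpow_neg_le_decayMajorant hσ ht x u, dist_comm u y,
          ofReal_rpow_neg_le_decayMajorant hσ ht y u]
    _ = K * (∫⁻ u, decayMajorant μ σ t x u ∂μ + ∫⁻ u, decayMajorant μ σ t y u ∂μ) := by
        rw [lintegral_const_mul' _ _ ENNReal.ofReal_ne_top,
          lintegral_add_left (measurable_decayMajorant μ σ t x)]
    _ ≤ _ := by
        rw [mul_add _ (μ (ball x t))]
        gcongr <;> exact hdbl.lintegral_decayMajorant_le σ ht _

lemma IsBallDoubling.integral_decay_mul_decay_le {C : ℝ≥0∞} (hdbl : IsBallDoubling μ C)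
    {σ t : ℝ} (hσ : 0 ≤ σ) (ht : 0 < t) (x y : M) (hC : decayConst C σ ≠ ⊤)
    (hx : μ (ball x t) ≠ ⊤) (hy : μ (ball y t) ≠ ⊤) :
    ∫ u, (1 + dist x u / t) ^ (-σ) * (1 + dist u y / t) ^ (-σ) ∂μ ≤
      2 ^ σ * (1 + dist x y / t) ^ (-σ) *
        ((decayConst C σ).toReal * ((μ (ball x t)).toReal + (μ (ball y t)).toReal)) := by
  calc ∫ u, (1 + dist x u / t) ^ (-σ) * (1 + dist u y / t) ^ (-σ) ∂μ
      ≤ (∫⁻ u, ENNReal.ofReal ((1 + dist x u / t) ^ (-σ) * (1 + dist u y / t) ^ (-σ)) ∂μ).toReal :=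
        integral_le_toReal_lintegral_ofReal fun u ↦ by positivity
    _ ≤ _ := ENNReal.toReal_mono (by finiteness) (hdbl.lintegral_decay_mul_decay_le hσ ht x y)
    _ = _ := by
        rw [ENNReal.toReal_mul, ENNReal.toReal_mul, ENNReal.toReal_add hx hy,
          ENNReal.toReal_ofReal (by positivity)]

end Doubling

theorem integral_decay_convolution_general {M : Type*} [MetricSpace M] [MeasurableSpace M]
    (μ : Measure M) (c₀ : ℝ) (hc₀ : 1 < c₀)
    (hfin : ∀ (x : M) (r : ℝ), 0 < r → μ (ball x r) < ⊤)
    (hdbl : ∀ (x : M) (r : ℝ), 0 < r →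
      (μ (ball x (2 * r))).toReal ≤ c₀ * (μ (ball x r)).toReal)
    (σ : ℝ) (hσ : Real.logb 2 c₀ < σ) :
    ∃ c > 0, ∀ (x y : M) (t : ℝ), 0 < t →
      (∫ u, (1 + dist x u / t) ^ (-σ) * (1 + dist u y / t) ^ (-σ) ∂μ) ≤
        c * (μ (ball x t)).toReal * (1 + dist x y / t) ^ (-σ + Real.logb 2 c₀) := by
  have hd : 0 < Real.logb 2 c₀ := Real.logb_pos one_lt_two hc₀
  have hdbl' := isBallDoubling_ofReal (by linarith) hfin hdbl
  set A := decayConst (ENNReal.ofReal c₀) σ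
  have hA : A ≠ ⊤ := decayConst_ofReal_ne_top (by linarith) hσ
  have hA₀ : 0 < A.toReal :=
    ENNReal.toReal_pos (decayConst_ne_zero (ENNReal.ofReal_pos.2 (by linarith)).ne' σ) hA
  refine ⟨2 ^ σ * A.toReal * (1 + c₀), by positivity, fun x y t ht ↦ ?_⟩
  have hx := (hfin x t ht).ne
  have hmove := hdbl'.toReal_measure_ball_le hc₀.le x y ht hx
  have hD : 1 ≤ (1 + dist x y / t) ^ Real.logb 2 c₀ :=
    Real.one_le_rpow (le_add_of_nonneg_right (by positivity)) hd.le
  calc ∫ u, (1 + dist x u / t) ^ (-σ) * (1 + dist u y / t) ^ (-σ) ∂μ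
      ≤ 2 ^ σ * (1 + dist x y / t) ^ (-σ) *
          (A.toReal * ((μ (ball x t)).toReal + (μ (ball y t)).toReal)) :=
        hdbl'.integral_decay_mul_decay_le (hd.trans hσ).le ht x y hA hx (hfin y t ht).ne
    _ ≤ 2 ^ σ * (1 + dist x y / t) ^ (-σ) * (A.toReal *
          ((1 + c₀) * (1 + dist x y / t) ^ Real.logb 2 c₀ * (μ (ball x t)).toReal)) := by
        gcongr
        nlinarith [ENNReal.toReal_nonneg (a := μ (ball x t))]
    _ = _ := by
        rw [Real.rpow_add (by positivity)]
        ring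

theorem integral_decay_convolution {M : Type*} [MetricSpace M] [MeasurableSpace M]
    (μ : Measure M) (c₀ : ℝ) (hc₀ : 1 < c₀)
    (hpos : ∀ (x : M) (r : ℝ), 0 < r → 0 < μ (ball x r))
    (hfin : ∀ (x : M) (r : ℝ), 0 < r → μ (ball x r) < ⊤)
    (hdbl : ∀ (x : M) (r : ℝ), 0 < r →
      (μ (ball x (2 * r))).toReal ≤ c₀ * (μ (ball x r)).toReal)
    (σ : ℝ) (hσ : Real.logb 2 c₀ < σ) :
    ∃ c > 0, ∀ (x y : M) (t : ℝ), 0 < t →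
      (∫ u, (1 + dist x u / t) ^ (-σ) * (1 + dist u y / t) ^ (-σ) ∂μ) ≤
        c * (μ (ball x t)).toReal * (1 + dist x y / t) ^ (-σ + Real.logb 2 c₀) :=
  integral_decay_convolution_general μ c₀ hc₀ hfin hdbl σ hσ
end

section
/- (Whitney-type covering, part (a) and (b)) Let (M, ρ) be a metric space and Ω a nonempty open proper subset of M. Set ρ(x) := dist(x, Ωᶜ) for x ∈ Ω. Then there exists a countable family of points {ξ_j} in Ω such that, with ρ_j := dist(ξ_j, Ωᶜ): (a) Ω = ⋃_j B(ξ_j, ρ_j/2); and (b) the balls B(ξ_j, ρ_j/5) are pairwise disjoint. -/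
open Metric Set

theorem whitney_cover_ab {M : Type*} [MetricSpace M] [TopologicalSpace.SeparableSpace M]
    (Ω : Set M) (hΩo : IsOpen Ω) (hne : Ω.Nonempty) (hproper : Ω ≠ univ) :
    ∃ J : Set M, J.Countable ∧ J ⊆ Ω ∧
      Ω = (⋃ ξ ∈ J, ball ξ (infDist ξ Ωᶜ / 2)) ∧
      J.PairwiseDisjoint (fun ξ => ball ξ (infDist ξ Ωᶜ / 5)) := by
  have hcne : Ωᶜ.Nonempty := by
    rw [nonempty_compl]; exact hproper
  have hpos : ∀ x ∈ Ω, 0 < infDist x Ωᶜ := fun x hx =>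
    (hΩo.isClosed_compl.notMem_iff_infDist_pos hcne).1 (by simpa using hx)
  set S : Set (Set M) :=
    {J | J ⊆ Ω ∧ J.PairwiseDisjoint (fun ξ => ball ξ (infDist ξ Ωᶜ / 5))} with hS
  obtain ⟨J, hJmax⟩ := zorn_subset S (fun c hcS hchain => by
    refine ⟨⋃₀ c, ⟨?_, ?_⟩, fun s hs => subset_sUnion_of_mem hs⟩
    · exact sUnion_subset fun s hs => (hcS hs).1
    · intro a ha b hb hab
      obtain ⟨s, hs, has⟩ := ha
      obtain ⟨t, ht, hbt⟩ := hb
      rcases hchain.total hs ht with h | h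
      · exact (hcS ht).2 (h has) hbt hab
      · exact (hcS hs).2 has (h hbt) hab)
  obtain ⟨⟨hJΩ, hdisj⟩, hmax⟩ := hJmax
  refine ⟨J, ?_, hJΩ, ?_, hdisj⟩
  · exact hdisj.countable_of_isOpen (fun ξ _ => isOpen_ball)
      (fun ξ hξ => nonempty_ball.2 (by linarith [hpos ξ (hJΩ hξ)]))
  · apply Subset.antisymm
    · intro x hx
      by_cases hall : ∀ ξ ∈ J, ξ ≠ x →
          Disjoint (ball x (infDist x Ωᶜ / 5)) (ball ξ (infDist ξ Ωᶜ / 5))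
      · have hins : insert x J ∈ S := by
          refine ⟨insert_subset hx hJΩ, ?_⟩
          rw [Set.pairwiseDisjoint_insert]
          exact ⟨hdisj, fun b hb hxb => hall b hb (Ne.symm hxb)⟩
        have hxJ : x ∈ J := hmax hins (subset_insert x J) (mem_insert x J)
        exact mem_biUnion hxJ (mem_ball_self (by linarith [hpos x hx]))
      · push_neg at hall
        obtain ⟨ξ, hξJ, _, hnd⟩ := hall
        obtain ⟨z, hz1, hz2⟩ := Set.not_disjoint_iff.1 hnd
        rw [mem_ball] at hz1 hz2
        have hd : dist x ξ < infDist x Ωᶜ / 5 + infDist ξ Ωᶜ / 5 := by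
          calc dist x ξ ≤ dist x z + dist z ξ := dist_triangle x z ξ
          _ = dist z x + dist z ξ := by rw [dist_comm z x]
          _ < _ := by linarith
        have hlip : infDist x Ωᶜ ≤ infDist ξ Ωᶜ + dist x ξ := by
          have := infDist_le_infDist_add_dist (x := x) (y := ξ) (s := Ωᶜ)
          linarith
        have hle : infDist x Ωᶜ ≤ 3 / 2 * infDist ξ Ωᶜ := by linarith
        refine mem_biUnion hξJ ?_
        rw [mem_ball]
        linarith
    · refine iUnion₂_subset fun ξ hξ => fun y hy => ?_
      rw [mem_ball] at hy
      by_contra hyΩ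
      have : infDist ξ Ωᶜ ≤ dist ξ y := infDist_le_dist_of_mem (by simpa using hyΩ)
      rw [dist_comm] at this
      have := hpos ξ (hJΩ hξ)
      linarith
end

section
/- (Calderón-type reproducing identity) Let φ : ℝ → ℝ be a Schwartz function and N ≥ 1 an integer. Define ψ₀(λ) := Σ_{m=1}^{N} C(N,m) φ(λ)^{2m-1} (1 - φ(λ)²)^{N-m} and ψ(λ) := [φ(λ) + φ(2λ)] Σ_{m=1}^{N} C(N,m) [φ(λ)² - φ(2λ)²]^{m-1} (1 - φ(λ)²)^{N-m}. If φ(0) = 1, then for all λ ∈ ℝ, ψ₀(λ) φ(λ) + Σ_{k=1}^{∞} ψ(2^{-k}λ)[φ(2^{-k}λ) - φ(2^{-k+1}λ)] = 1, with the series converging absolutely. Moreover ψ₀(0) = 1 and ψ^{(ν)}(0) = 0 for ν = 0, 1, ..., N-2 when φ is smooth. -/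
/-!
With `q(λ) = (1 - φ(λ)²)^N`, the binomial theorem turns the defining sums into
`ψ₀(λ) φ(λ) = 1 - q(λ)` and `ψ(λ) (φ(λ) - φ(2λ)) = q(2λ) - q(λ)`, so the series telescopes to
`q(λ) - lim_k q(2^{-k}λ) = q(λ)`. Since `q` is differentiable with `q(0) = 0`, the terms
`q(2^{-k}λ)` are `O(2^{-k})`, which gives absolute convergence. Each summand of `ψ` is a product
of `N - 1` smooth factors vanishing at `0`, so by Leibniz's rule `ψ` vanishes to order `N - 1`.
-/

open Finset Asymptotics Topology
open scoped ContDiff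

section Binomial

variable {R : Type*} [CommRing R]

theorem sum_Icc_choose_mul_pow_mul_pow (N : ℕ) (u v : R) :
    ∑ m ∈ Icc 1 N, (N.choose m : R) * u ^ m * v ^ (N - m) = (u + v) ^ N - v ^ N := by
  rw [add_pow, range_eq_Ico, sum_eq_sum_Ico_succ_bot N.succ_pos, eq_sub_iff_add_eq']
  simp only [pow_zero, Nat.sub_zero, Nat.choose_zero_right, Nat.cast_one, one_mul, mul_one]
  exact congrArg _ (sum_congr rfl fun m _ => by ring)

theorem sum_Icc_choose_mul_pow_pred_mul_pow_mul (N : ℕ) (u v : R) :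
    (∑ m ∈ Icc 1 N, (N.choose m : R) * u ^ (m - 1) * v ^ (N - m)) * u = (u + v) ^ N - v ^ N := by
  rw [← sum_Icc_choose_mul_pow_mul_pow, sum_mul]
  refine sum_congr rfl fun m hm => ?_
  have hm0 : m ≠ 0 := by grind
  rw [← pow_sub_one_mul hm0 u]
  ring

theorem sum_Icc_choose_mul_pow_two_mul_sub_one_mul (N : ℕ) (a : R) :
    (∑ m ∈ Icc 1 N, (N.choose m : R) * a ^ (2 * m - 1) * (1 - a ^ 2) ^ (N - m)) * a
      = 1 - (1 - a ^ 2) ^ N := by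
  have h := sum_Icc_choose_mul_pow_pred_mul_pow_mul N (a ^ 2) (1 - a ^ 2)
  rw [add_sub_cancel, one_pow] at h
  rw [← h, sum_mul, sum_mul]
  refine sum_congr rfl fun m hm => ?_
  obtain ⟨k, rfl⟩ : ∃ k, m = k + 1 := ⟨m - 1, by grind⟩
  rw [show 2 * (k + 1) - 1 = 2 * k + 1 by omega, Nat.add_sub_cancel]
  ring

theorem add_mul_sum_Icc_choose_mul_pow_pred_mul_pow_mul_sub (N : ℕ) (a b : R) :
    (a + b) * (∑ m ∈ Icc 1 N, (N.choose m : R) * (a ^ 2 - b ^ 2) ^ (m - 1) * (1 - a ^ 2) ^ (N - m))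
      * (a - b) = (1 - b ^ 2) ^ N - (1 - a ^ 2) ^ N := by
  rw [← sub_add_sub_cancel' (a ^ 2) (b ^ 2) 1, ← sum_Icc_choose_mul_pow_pred_mul_pow_mul]
  ring

end Binomial

theorem Summable.hasSum_sub_succ {α : Type*} [AddCommGroup α] [TopologicalSpace α]
    [IsTopologicalAddGroup α] [T2Space α] {G : ℕ → α} (hG : Summable G) :
    HasSum (fun k => G k - G (k + 1)) (G 0) := by
  have hshift : HasSum (fun k => G (k + 1)) (∑' k, G k - G 0) := by
    simpa using (hasSum_nat_add_iff' 1).2 hG.hasSum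
  simpa using hG.hasSum.sub hshift

theorem Summable.comp_of_differentiableAt_zero {ι E F : Type*} [NormedAddCommGroup E]
    [NormedSpace ℝ E] [FiniteDimensional ℝ E] [NormedAddCommGroup F] [NormedSpace ℝ F]
    [CompleteSpace F] {f : E → F} (hf : DifferentiableAt ℝ f 0) (hf0 : f 0 = 0) {g : ι → E}
    (hg : Summable g) : Summable (f ∘ g) := by
  have hO : (fun y => f y) =O[𝓝 0] fun y => y := by simpa [hf0] using hf.isBigO_sub
  exact hO.comp_summable hg

theorem hasSum_dyadic_sub {F : Type*} [NormedAddCommGroup F] [NormedSpace ℝ F] [CompleteSpace F]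
    {q : ℝ → F} (hq : DifferentiableAt ℝ q 0) (hq0 : q 0 = 0) (l : ℝ) :
    HasSum (fun k : ℕ => q ((2 : ℝ) ^ (-(k : ℤ)) * l) - q ((2 : ℝ) ^ (-(k : ℤ) - 1) * l)) (q l) := by
  have hgeom : Summable fun k : ℕ => (2 : ℝ) ^ (-(k : ℤ)) * l := by
    simpa only [zpow_neg, zpow_natCast, inv_pow] using
      (summable_geometric_of_lt_one (by norm_num) (by norm_num : (2 : ℝ)⁻¹ < 1)).mul_right l
  convert (hgeom.comp_of_differentiableAt_zero hq hq0).hasSum_sub_succ using 1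
  · ext k
    simp only [Function.comp_apply, Nat.cast_succ, neg_add']
  · simp

section VanishesToOrder

variable {𝕜 : Type*} [NontriviallyNormedField 𝕜] {𝔸 : Type*} [NormedRing 𝔸]
  [NormedAlgebra 𝕜 𝔸] {f g u v : 𝕜 → 𝔸} {x : 𝕜} {a b : ℕ}

def VanishesToOrder (f : 𝕜 → 𝔸) (x : 𝕜) (n : ℕ) : Prop :=
  ∀ i < n, iteratedDeriv i f x = 0

theorem vanishesToOrder_zero (f : 𝕜 → 𝔸) (x : 𝕜) : VanishesToOrder f x 0 :=
  fun _ hi => absurd hi (Nat.not_lt_zero _)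

theorem VanishesToOrder.mono (hf : VanishesToOrder f x a) (hba : b ≤ a) :
    VanishesToOrder f x b :=
  fun i hi => hf i (hi.trans_le hba)

theorem VanishesToOrder.mul (hf : VanishesToOrder f x a) (hg : VanishesToOrder g x b)
    (hfs : ContDiffAt 𝕜 ∞ f x) (hgs : ContDiffAt 𝕜 ∞ g x) :
    VanishesToOrder (fun y => f y * g y) x (a + b) := by
  intro i hi
  rw [iteratedDeriv_fun_mul (hfs.of_le (by exact_mod_cast le_top))
    (hgs.of_le (by exact_mod_cast le_top))]
  refine sum_eq_zero fun j hj => ?_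
  rcases lt_or_ge j a with hja | hja
  · rw [hf j hja, mul_zero, zero_mul]
  · rw [hg (i - j) (by grind), mul_zero]

theorem vanishesToOrder_pow (hfs : ContDiffAt 𝕜 ∞ f x) (hf0 : f x = 0) (n : ℕ) :
    VanishesToOrder (fun y => f y ^ n) x n := by
  induction n with
  | zero => exact vanishesToOrder_zero _ x
  | succ n ih =>
    have hf : VanishesToOrder f x 1 := fun i hi => by
      rwa [Nat.lt_one_iff.1 hi, iteratedDeriv_zero]
    simpa only [pow_succ, add_comm 1 n] using ih.mul hf (hfs.pow n) hfs

theorem VanishesToOrder.sum {ι : Type*} {s : Finset ι} {F : ι → 𝕜 → 𝔸} {n : ℕ}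
    (hF : ∀ i ∈ s, VanishesToOrder (F i) x n) (hFs : ∀ i ∈ s, ContDiffAt 𝕜 ∞ (F i) x) :
    VanishesToOrder (fun y => ∑ i ∈ s, F i y) x n := by
  intro j hj
  rw [iteratedDeriv_fun_sum fun i hi => (hFs i hi).of_le (by exact_mod_cast le_top)]
  exact sum_eq_zero fun i hi => hF i hi j hj

theorem vanishesToOrder_sum_Icc_choose_mul_pow_pred_mul_pow (hu : ContDiffAt 𝕜 ∞ u x)
    (hv : ContDiffAt 𝕜 ∞ v x) (hu0 : u x = 0) (hv0 : v x = 0) (N : ℕ) :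
    VanishesToOrder (fun y => ∑ m ∈ Icc 1 N, (N.choose m : 𝔸) * u y ^ (m - 1) * v y ^ (N - m))
      x (N - 1) := by
  refine VanishesToOrder.sum (fun m hm => ?_) fun m _ => by fun_prop
  -- the orders of the three factors add up to `0 + (m - 1) + (N - m) = N - 1`
  have hcu := (vanishesToOrder_zero (fun _ => (N.choose m : 𝔸)) x).mul
    (vanishesToOrder_pow hu hu0 (m - 1)) contDiffAt_const (hu.pow _)
  exact (hcu.mul (vanishesToOrder_pow hv hv0 (N - m)) (contDiffAt_const.mul (hu.pow _))
    (hv.pow _)).mono (by grind)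

end VanishesToOrder

theorem calderon_reproducing (φ : SchwartzMap ℝ ℝ) (N : ℕ) (hN : 1 ≤ N)
    (hφ0 : φ 0 = 1)
    (ψ₀ ψ : ℝ → ℝ)
    (hψ₀ : ∀ l : ℝ, ψ₀ l = ∑ m ∈ Finset.Icc 1 N,
      (N.choose m : ℝ) * φ l ^ (2 * m - 1) * (1 - φ l ^ 2) ^ (N - m))
    (hψ : ∀ l : ℝ, ψ l = (φ l + φ (2 * l)) * ∑ m ∈ Finset.Icc 1 N,
      (N.choose m : ℝ) * (φ l ^ 2 - φ (2 * l) ^ 2) ^ (m - 1) * (1 - φ l ^ 2) ^ (N - m)) :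
    (∀ l : ℝ,
      HasSum (fun k : ℕ => ψ ((2 : ℝ) ^ (-(k : ℤ) - 1) * l) *
          (φ ((2 : ℝ) ^ (-(k : ℤ) - 1) * l) - φ ((2 : ℝ) ^ (-(k : ℤ)) * l)))
        (1 - ψ₀ l * φ l) ∧
      Summable (fun k : ℕ => |ψ ((2 : ℝ) ^ (-(k : ℤ) - 1) * l) *
          (φ ((2 : ℝ) ^ (-(k : ℤ) - 1) * l) - φ ((2 : ℝ) ^ (-(k : ℤ)) * l))|)) ∧
    ψ₀ 0 = 1 ∧
    (∀ ν : ℕ, (ν : ℤ) ≤ (N : ℤ) - 2 → iteratedDeriv ν ψ 0 = 0) := by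
  have hN0 : N ≠ 0 := by omega
  have hψ₀φ (l : ℝ) : ψ₀ l * φ l = 1 - (1 - φ l ^ 2) ^ N := by
    rw [hψ₀]; exact sum_Icc_choose_mul_pow_two_mul_sub_one_mul N (φ l)
  have hψφ (x : ℝ) : ψ x * (φ x - φ (2 * x)) = (1 - φ (2 * x) ^ 2) ^ N - (1 - φ x ^ 2) ^ N := by
    rw [hψ]; exact add_mul_sum_Icc_choose_mul_pow_pred_mul_pow_mul_sub N (φ x) (φ (2 * x))
  refine ⟨fun l => ?_, by simpa [hφ0, hN0] using hψ₀φ 0, fun ν hν => ?_⟩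
  · have hterm (k : ℕ) : ψ ((2 : ℝ) ^ (-(k : ℤ) - 1) * l) *
          (φ ((2 : ℝ) ^ (-(k : ℤ) - 1) * l) - φ ((2 : ℝ) ^ (-(k : ℤ)) * l))
        = (1 - φ ((2 : ℝ) ^ (-(k : ℤ)) * l) ^ 2) ^ N
          - (1 - φ ((2 : ℝ) ^ (-(k : ℤ) - 1) * l) ^ 2) ^ N := by
      have hdouble : 2 * ((2 : ℝ) ^ (-(k : ℤ) - 1) * l) = (2 : ℝ) ^ (-(k : ℤ)) * l := by
        rw [← mul_assoc, ← zpow_one_add₀ two_ne_zero, add_sub_cancel]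
      simpa only [hdouble] using hψφ ((2 : ℝ) ^ (-(k : ℤ) - 1) * l)
    have hsum := hasSum_dyadic_sub (q := fun x => (1 - φ x ^ 2) ^ N) (by fun_prop)
      (by simp [hφ0, hN0]) l
    rw [hψ₀φ, sub_sub_cancel]
    simp only [hterm]
    exact ⟨hsum, hsum.summable.abs⟩
  · have hS := vanishesToOrder_sum_Icc_choose_mul_pow_pred_mul_pow (x := 0)
      (u := fun y => φ y ^ 2 - φ (2 * y) ^ 2) (v := fun y => 1 - φ y ^ 2)
      (by fun_prop) (by fun_prop) (by simp [hφ0]) (by simp [hφ0]) N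
    have hψv := (vanishesToOrder_zero (fun y => φ y + φ (2 * y)) 0).mul hS (by fun_prop)
      (by fun_prop)
    rw [funext hψ]
    exact hψv ν (by omega)
end

section
/- For every m ≥ 1 there exists a real-valued even Schwartz function φ on ℝ such that the Fourier transform of φ is supported in [-1, 1], φ(0) = 1, and φ^{(ν)}(0) = 0 for ν = 1, 2, ..., m. -/
/-!
Let `ψ` be the inverse Fourier transform of an even normalized bump supported in
`[-1/(m+1), 1/(m+1)]`; it is real, even, band-limited and `ψ 0 = 1`. The dilates `ψ ((j + 1) x)`,
`j = 0, …, m`, keep their spectra inside `[-1, 1]`, and the `ν`-th derivative at `0` of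
`∑ a j * ψ ((j + 1) x)` is `(∑ a j * (j + 1) ^ ν) * iteratedDeriv ν ψ 0`. Taking for `a j` the
values at `0` of the Lagrange basis on the nodes `1, …, m + 1` makes these moments equal to `0 ^ ν`
for `ν ≤ m`.
-/

open Real Set FourierTransform SchwartzMap ComplexConjugate

theorem Lagrange.sum_eval_basis_mul_pow {ι F : Type*} [Field F] [DecidableEq ι]
    {s : Finset ι} {v : ι → F} (hvs : Set.InjOn v s) {n : ℕ} (hn : n < s.card) (x : F) :
    ∑ i ∈ s, (Lagrange.basis s v i).eval x * v i ^ n = x ^ n := by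
  have h := congrArg (Polynomial.eval x)
    (Lagrange.eq_interpolate hvs (f := Polynomial.X ^ n) (by simpa using hn))
  simp only [Lagrange.interpolate_apply, Polynomial.eval_finsetSum, Polynomial.eval_mul,
    Polynomial.eval_C, Polynomial.eval_pow, Polynomial.eval_X] at h
  simp_rw [mul_comm]
  exact h.symm

theorem exists_sum_mul_add_one_pow_eq_zero_pow (m : ℕ) :
    ∃ a : ℕ → ℝ, ∀ ν ≤ m, ∑ j ∈ Finset.range (m + 1), a j * ((j : ℝ) + 1) ^ ν = 0 ^ ν := by
  have hinj : Set.InjOn (fun j : ℕ => (j : ℝ) + 1) (Finset.range (m + 1)) :=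
    fun i _ j _ h => by simpa using h
  exact ⟨fun j => (Lagrange.basis (Finset.range (m + 1)) _ j).eval 0, fun ν hν =>
    Lagrange.sum_eval_basis_mul_pow hinj (by simpa [Nat.lt_succ_iff] using hν) 0⟩

theorem iteratedDeriv_sum_mul_comp_mul_zero {ι 𝕜 : Type*} [NontriviallyNormedField 𝕜]
    (s : Finset ι) (a v : ι → 𝕜) {f : 𝕜 → 𝕜} {n : ℕ} (hf : ContDiff 𝕜 n f) :
    iteratedDeriv n (fun x => ∑ i ∈ s, a i * f (v i * x)) 0
      = (∑ i ∈ s, a i * v i ^ n) * iteratedDeriv n f 0 := by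
  have hterm : ∀ i ∈ s, ContDiffAt 𝕜 n (fun x => a i * f (v i * x)) 0 := fun i _ =>
    (contDiff_const.mul (hf.comp (contDiff_const.mul contDiff_id))).contDiffAt
  rw [iteratedDeriv_fun_sum hterm, Finset.sum_mul]
  refine Finset.sum_congr rfl fun i _ => ?_
  simp only [iteratedDeriv_const_mul_field, iteratedDeriv_comp_const_mul hf, mul_zero, mul_assoc]

namespace Real

theorem fourier_comp_mul_left {E : Type*} [NormedAddCommGroup E] [NormedSpace ℂ E]
    (f : ℝ → E) {c : ℝ} (hc : c ≠ 0) (ξ : ℝ) :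
    𝓕 (fun x => f (c * x)) ξ = |c⁻¹| • 𝓕 f (c⁻¹ * ξ) := by
  rw [fourier_real_eq, fourier_real_eq, ← MeasureTheory.Measure.integral_comp_mul_left _ c]
  congr 1 with x
  field_simp

variable {V : Type*} [NormedAddCommGroup V] [InnerProductSpace ℝ V] [FiniteDimensional ℝ V]
  [MeasurableSpace V] [BorelSpace V]

theorem conj_fourier (f : V → ℂ) (w : V) :
    conj (𝓕 f w) = 𝓕⁻ (fun v => conj (f v)) w := by
  rw [fourier_eq, fourierInv_eq, ← integral_conj]
  congr 1 with v
  simp [Circle.smul_def, ← Circle.coe_inv_eq_conj, ← AddChar.map_neg_eq_inv]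

theorem fourierInv_eq_fourier_of_even {E : Type*} [NormedAddCommGroup E] [NormedSpace ℂ E]
    {f : V → E} (hf : ∀ x, f (-x) = f x) : 𝓕⁻ f = 𝓕 f := by
  rw [fourierInv_eq_fourier_comp_neg, funext hf]

theorem conj_fourier_ofReal_of_even {g : V → ℝ} (hg : ∀ x, g (-x) = g x) (w : V) :
    conj (𝓕 (fun x => (g x : ℂ)) w) = 𝓕 (fun x => (g x : ℂ)) w := by
  simp only [conj_fourier, Complex.conj_ofReal]
  rw [fourierInv_eq_fourier_of_even (by simp [hg])]

end Real

namespace SchwartzMap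

noncomputable def dilate {F : Type*} [NormedAddCommGroup F] [NormedSpace ℝ F] (c : ℝ)
    (hc : c ≠ 0) : 𝓢(ℝ, F) →L[ℝ] 𝓢(ℝ, F) :=
  compCLMOfContinuousLinearEquiv ℝ (LinearEquiv.smulOfNeZero ℝ ℝ c hc).toContinuousLinearEquiv

@[simp]
theorem dilate_apply {F : Type*} [NormedAddCommGroup F] [NormedSpace ℝ F] (c : ℝ) (hc : c ≠ 0)
    (f : 𝓢(ℝ, F)) (x : ℝ) : dilate c hc f x = f (c * x) :=
  rfl

/-- Stated through the Fourier transform on `𝓢(ℝ, ℂ)`, which is linear; `mem_bandlimited` is the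
pointwise form. -/
noncomputable def bandlimited (r : ℝ) : Submodule ℝ 𝓢(ℝ, ℝ) where
  carrier := {f | Function.support ⇑(𝓕 (f.postcompCLM Complex.ofRealCLM) : 𝓢(ℝ, ℂ)) ⊆ Icc (-r) r}
  zero_mem' := by
    simp [FourierTransform.fourier_zero]
  add_mem' {f g} hf hg := by
    simp only [mem_ofPred_eq, map_add, FourierTransform.fourier_add] at *
    exact (Function.support_add _ _).trans (union_subset hf hg)
  smul_mem' c f hf := by
    simp only [mem_ofPred_eq, map_smul, FourierTransform.fourier_smul] at *
    exact (Function.support_smul_subset_right _ _).trans hf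

theorem mem_bandlimited {r : ℝ} {f : 𝓢(ℝ, ℝ)} :
    f ∈ bandlimited r ↔ Function.support (𝓕 fun x => (f x : ℂ)) ⊆ Icc (-r) r :=
  Iff.rfl

theorem bandlimited_mono {r s : ℝ} (h : r ≤ s) : bandlimited r ≤ bandlimited s :=
  fun _ hf => hf.trans (Icc_subset_Icc (neg_le_neg h) h)

theorem dilate_mem_bandlimited {r c : ℝ} (hc : c ≠ 0) {f : 𝓢(ℝ, ℝ)} (hf : f ∈ bandlimited r) :
    dilate c hc f ∈ bandlimited (|c| * r) := by
  rw [mem_bandlimited] at *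
  intro ξ hξ
  simp only [dilate_apply, Function.mem_support,
    Real.fourier_comp_mul_left (fun y => (f y : ℂ)) hc] at hξ
  have := abs_le.2 (hf (Function.mem_support.2 (right_ne_zero_of_smul hξ)))
  rw [abs_mul, abs_inv, inv_mul_le_iff₀ (abs_pos.2 hc)] at this
  exact abs_le.1 this

theorem exists_even_fourier_postcompCLM_ofReal_eq {V : Type*} [NormedAddCommGroup V]
    [InnerProductSpace ℝ V] [FiniteDimensional ℝ V] [MeasurableSpace V] [BorelSpace V]
    {g : 𝓢(V, ℝ)} (hg : ∀ x, g (-x) = g x) :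
    ∃ ψ : 𝓢(V, ℝ), (∀ x, ψ (-x) = ψ x) ∧ ψ 0 = ∫ x, g x ∧
      𝓕 (ψ.postcompCLM Complex.ofRealCLM) = g.postcompCLM Complex.ofRealCLM := by
  let G : 𝓢(V, ℂ) := g.postcompCLM Complex.ofRealCLM
  have hG : ∀ x, G (-x) = G x := fun x => congrArg Complex.ofReal (hg x)
  let ψC : 𝓢(V, ℂ) := 𝓕⁻ G
  have hψC : ⇑ψC = 𝓕 fun x => (g x : ℂ) := by
    rw [fourierInv_coe, Real.fourierInv_eq_fourier_of_even hG]
    rfl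
  let ψ : 𝓢(V, ℝ) := ψC.postcompCLM Complex.reCLM
  have hψ : ψ.postcompCLM Complex.ofRealCLM = ψC := by
    ext x
    refine Complex.conj_eq_iff_re.mp ?_
    rw [hψC, Real.conj_fourier_ofReal_of_even hg]
  refine ⟨ψ, fun x => ?_, ?_, by rw [hψ, fourier_fourierInv_eq]⟩
  · simp only [ψ, postcompCLM_apply, hψC, ← Real.fourierInv_eq_fourier_neg,
      Real.fourierInv_eq_fourier_of_even (f := fun x => (g x : ℂ)) hG]
  · simp only [ψ, postcompCLM_apply, hψC, Real.fourier_eq, inner_zero_right, neg_zero,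
      AddChar.map_zero_eq_one, one_smul, Complex.reCLM_apply]
    rw [integral_complex_ofReal, Complex.ofReal_re]

theorem exists_even_apply_zero_eq_one_mem_bandlimited {r : ℝ} (hr : 0 < r) :
    ∃ ψ : 𝓢(ℝ, ℝ), (∀ x, ψ (-x) = ψ x) ∧ ψ 0 = 1 ∧ ψ ∈ bandlimited r := by
  let b : ContDiffBump (0 : ℝ) := ⟨r / 2, r, by positivity, by linarith⟩
  let g : 𝓢(ℝ, ℝ) :=
    (b.hasCompactSupport_normed (μ := MeasureTheory.volume)).toSchwartzMap b.contDiff_normed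
  obtain ⟨ψ, hψ_even, hψ_zero, hψ_fourier⟩ :=
    exists_even_fourier_postcompCLM_ofReal_eq (g := g) b.normed_neg
  refine ⟨ψ, hψ_even, hψ_zero.trans b.integral_normed, ?_⟩
  have hg_support : Function.support ⇑(g.postcompCLM Complex.ofRealCLM) = Metric.ball 0 r :=
    (Function.support_comp_eq Complex.ofReal Complex.ofReal_eq_zero g).trans
      (b.support_normed_eq (μ := MeasureTheory.volume))
  show Function.support ⇑(𝓕 (ψ.postcompCLM Complex.ofRealCLM) : 𝓢(ℝ, ℂ)) ⊆ _
  rw [hψ_fourier, hg_support, Real.ball_eq_Ioo, zero_sub, zero_add]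
  exact Ioo_subset_Icc_self

end SchwartzMap

theorem exists_bandlimited_schwartz_general (m : ℕ) :
    ∃ φ : SchwartzMap ℝ ℝ,
      (∀ x : ℝ, φ (-x) = φ x) ∧
      (Function.support (𝓕 (fun x : ℝ => (φ x : ℂ))) ⊆ Set.Icc (-1 : ℝ) 1) ∧
      φ 0 = 1 ∧
      (∀ ν : ℕ, 1 ≤ ν → ν ≤ m → iteratedDeriv ν (fun x : ℝ => φ x) 0 = 0) := by
  obtain ⟨ψ, hψ_even, hψ_zero, hψ_band⟩ :=
    exists_even_apply_zero_eq_one_mem_bandlimited (r := ((m : ℝ) + 1)⁻¹) (by positivity)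
  obtain ⟨a, ha⟩ := exists_sum_mul_add_one_pow_eq_zero_pow m
  let φ : 𝓢(ℝ, ℝ) := ∑ j ∈ Finset.range (m + 1),
    a j • dilate ((j : ℝ) + 1) (Nat.cast_add_one_ne_zero j) ψ
  have hφ : ∀ x, φ x = ∑ j ∈ Finset.range (m + 1), a j * ψ (((j : ℝ) + 1) * x) := fun x => by
    simp [φ]
  refine ⟨φ, fun x => ?_, mem_bandlimited.1 ?_, ?_, fun ν hν hνm => ?_⟩
  · simp only [hφ, mul_neg, hψ_even]
  · refine Submodule.sum_mem _ fun j hj => Submodule.smul_mem _ _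
      (bandlimited_mono ?_ (dilate_mem_bandlimited _ hψ_band))
    rw [abs_of_pos (by positivity), ← div_eq_mul_inv, div_le_one (by positivity)]
    exact_mod_cast Nat.succ_le_succ (Finset.mem_range_succ_iff.1 hj)
  · simpa [hφ, hψ_zero] using ha 0 m.zero_le
  · rw [funext hφ, iteratedDeriv_sum_mul_comp_mul_zero _ _ _ (ψ.smooth ν), ha ν hνm,
      zero_pow (by omega), zero_mul]

theorem exists_bandlimited_schwartz (m : ℕ) (hm : 1 ≤ m) :
    ∃ φ : SchwartzMap ℝ ℝ,
      (∀ x : ℝ, φ (-x) = φ x) ∧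
      (Function.support (𝓕 (fun x : ℝ => (φ x : ℂ))) ⊆ Set.Icc (-1 : ℝ) 1) ∧
      φ 0 = 1 ∧
      (∀ ν : ℕ, 1 ≤ ν → ν ≤ m → iteratedDeriv ν (fun x : ℝ => φ x) 0 = 0) :=
  exists_bandlimited_schwartz_general m
end

section
/- Let (M, ρ, μ) be a doubling metric measure space with dimension d, and let 0 < θ ≤ 1 and γ > 2d/θ. Suppose F : M → [0,∞) is measurable and let M_θ F(x) := sup_{B ∋ x} ( |B|^{-1} ∫_B F(y)^θ dμ(y) )^{1/θ} be the θ-maximal function. Then there is a constant c > 0 such that for all x ∈ M and j ∈ ℤ, ∫_M F(z)^θ / ( μ(B(x, 2^{-j})) (1 + 2^j ρ(x,z))^{γθ - d} ) dμ(z) ≤ c (M_θ F(x))^θ. -/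
/-!
Split `M` into the ball `B(x, 2⁻ʲ)` and the annuli `B(x, 2^(m+1-j)) \ B(x, 2^(m-j))`. With
`E = γθ - d`, the weight is at least `2^(mE)` on the `m`-th annulus, while doubling gives
`μ(B(x, 2^(m+1-j))) ≤ c₀^(m+1) μ(B(x, 2⁻ʲ))` and the maximal function bounds the average of `F^θ`
over that ball. The `m`-th piece is thus at most `c₀ (c₀ / 2^E)^m (M_θ F(x))^θ`, and
`γθ > 2d` means `E > d`, i.e. `c₀ < 2^E`, so these pieces form a convergent geometric series.
-/

open MeasureTheory Metric Set

lemma setLIntegral_ofReal_le_mul {α : Type*} [MeasurableSpace α] {μ : Measure α} {s : Set α}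
    {f g : α → ℝ} {K : ℝ} (hg : AEMeasurable g (μ.restrict s)) (hK : 0 ≤ K)
    (hfg : ∀ z ∈ s, f z ≤ K * g z) :
    ∫⁻ z in s, ENNReal.ofReal (f z) ∂μ ≤ ENNReal.ofReal K * ∫⁻ z in s, ENNReal.ofReal (g z) ∂μ :=
  calc ∫⁻ z in s, ENNReal.ofReal (f z) ∂μ
      ≤ ∫⁻ z in s, ENNReal.ofReal K * ENNReal.ofReal (g z) ∂μ :=
        setLIntegral_mono_ae (hg.ennreal_ofReal.const_mul _) <| ae_of_all _ fun z hz => by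
          rw [← ENNReal.ofReal_mul hK]
          exact ENNReal.ofReal_le_ofReal (hfg z hz)
    _ = ENNReal.ofReal K * ∫⁻ z in s, ENNReal.ofReal (g z) ∂μ :=
        lintegral_const_mul' _ _ ENNReal.ofReal_ne_top

lemma ofReal_add_tsum_geometric_eq {c q A : ℝ} (hc : 0 ≤ c) (hq₀ : 0 ≤ q) (hq₁ : q < 1)
    (hA : 0 ≤ A) :
    ENNReal.ofReal A + ∑' m : ℕ, ENNReal.ofReal (c * q ^ m * A) =
      ENNReal.ofReal ((1 + c / (1 - q)) * A) := by
  have hsum : Summable fun m : ℕ => c * q ^ m * A :=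
    ((summable_geometric_of_lt_one hq₀ hq₁).mul_left c).mul_right A
  rw [← ENNReal.ofReal_tsum_of_nonneg (fun m => by positivity) hsum,
    ← ENNReal.ofReal_add hA (tsum_nonneg fun m => by positivity), tsum_mul_right, tsum_mul_left,
    tsum_geometric_of_lt_one hq₀ hq₁]
  congr 1
  ring

lemma lt_two_rpow_sub_logb {c e : ℝ} (hc : 0 < c) (he : 2 * Real.logb 2 c < e) :
    c < 2 ^ (e - Real.logb 2 c) :=
  calc c = 2 ^ Real.logb 2 c := (Real.rpow_logb two_pos (by norm_num) hc).symm
    _ < 2 ^ (e - Real.logb 2 c) := Real.rpow_lt_rpow_of_exponent_lt one_lt_two (by linarith)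

lemma div_mul_rpow_le_of_two_pow_le {y D w E : ℝ} (hy : 0 ≤ y) (hD : 0 < D) (hE : 0 ≤ E)
    {m : ℕ} (hw : (2 : ℝ) ^ m ≤ w) : y / (D * w ^ E) ≤ (D * (2 ^ E) ^ m)⁻¹ * y := by
  rw [inv_mul_eq_div, Real.rpow_pow_comm zero_le_two]
  gcongr

section MetricMeasure

variable {M : Type*} [PseudoMetricSpace M] {x : M}

lemma two_pow_le_one_add_mul_dist {a : ℝ} (ha : 0 < a) {m : ℕ} {z : M}
    (hz : z ∉ ball x (2 ^ m * a⁻¹)) : (2 : ℝ) ^ m ≤ 1 + a * dist x z := by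
  rw [mem_ball, not_lt, dist_comm, ← div_eq_mul_inv, div_le_iff₀ ha] at hz
  linarith

lemma univ_subset_ball_union_iUnion_annulus {t : ℝ} (ht : 0 < t) :
    (univ : Set M) ⊆ ball x t ∪ ⋃ m : ℕ, ball x (2 ^ (m + 1) * t) \ ball x (2 ^ m * t) := by
  intro z _
  by_cases hz : z ∈ ball x t
  · exact Or.inl hz
  · have hz' : 1 ≤ dist z x / t := by
      rw [le_div_iff₀ ht, one_mul]
      simpa [mem_ball] using hz
    obtain ⟨m, hm, hm'⟩ := exists_nat_pow_near hz' one_lt_two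
    refine Or.inr (mem_iUnion.2 ⟨m, ?_, ?_⟩)
    · exact mem_ball.2 ((div_lt_iff₀ ht).1 hm')
    · exact fun h => (mem_ball.1 h).not_ge ((le_div_iff₀ ht).1 hm)

variable [MeasurableSpace M] {μ : Measure M}

lemma lintegral_le_ball_add_tsum_annulus (f : M → ENNReal) {t : ℝ} (ht : 0 < t) :
    ∫⁻ z, f z ∂μ ≤ ∫⁻ z in ball x t, f z ∂μ +
      ∑' m : ℕ, ∫⁻ z in ball x (2 ^ (m + 1) * t) \ ball x (2 ^ m * t), f z ∂μ :=
  calc ∫⁻ z, f z ∂μ = ∫⁻ z in univ, f z ∂μ := by rw [Measure.restrict_univ]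
    _ ≤ ∫⁻ z in ball x t ∪ ⋃ m : ℕ, ball x (2 ^ (m + 1) * t) \ ball x (2 ^ m * t), f z ∂μ :=
        lintegral_mono_set (univ_subset_ball_union_iUnion_annulus ht)
    _ ≤ _ := (lintegral_union_le _ _ _).trans (add_le_add_right (lintegral_iUnion_le _ _) _)

lemma toReal_measure_ball_two_pow_mul_le {c₀ : ℝ} (hc₀ : 0 ≤ c₀)
    (hdbl : ∀ r : ℝ, 0 < r → (μ (ball x (2 * r))).toReal ≤ c₀ * (μ (ball x r)).toReal)
    (n : ℕ) {r : ℝ} (hr : 0 < r) :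
    (μ (ball x (2 ^ n * r))).toReal ≤ c₀ ^ n * (μ (ball x r)).toReal := by
  induction n with
  | zero => simp
  | succ n ih =>
    calc (μ (ball x (2 ^ (n + 1) * r))).toReal = (μ (ball x (2 * (2 ^ n * r)))).toReal := by
          rw [pow_succ', mul_assoc]
      _ ≤ c₀ * (μ (ball x (2 ^ n * r))).toReal := hdbl _ (by positivity)
      _ ≤ c₀ * (c₀ ^ n * (μ (ball x r)).toReal) := by gcongr
      _ = c₀ ^ (n + 1) * (μ (ball x r)).toReal := by ring

lemma integrableOn_ball_of_integrable_div_weight {f : M → ℝ} (hf : Measurable f)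
    (hf0 : ∀ z, 0 ≤ f z) {D a E : ℝ} (hD : 0 < D) (ha : 0 ≤ a) (hE : 0 ≤ E)
    (hint : Integrable (fun z => f z / (D * (1 + a * dist x z) ^ E)) μ) {R : ℝ} (hR : 0 ≤ R) :
    IntegrableOn f (ball x R) μ := by
  have hg0 : ∀ z, 0 ≤ f z / (D * (1 + a * dist x z) ^ E) := fun z => by
    have := hf0 z
    positivity
  refine ⟨hf.aestronglyMeasurable, (hasFiniteIntegral_iff_ofReal (ae_of_all _ hf0)).2 ?_⟩
  have hpointwise : ∀ z ∈ ball x R,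
      f z ≤ D * (1 + a * R) ^ E * (f z / (D * (1 + a * dist x z) ^ E)) := fun z hz => by
    have hw : 0 < D * (1 + a * dist x z) ^ E := by positivity
    calc f z = D * (1 + a * dist x z) ^ E * (f z / (D * (1 + a * dist x z) ^ E)) :=
          (mul_div_cancel₀ _ hw.ne').symm
      _ ≤ D * (1 + a * R) ^ E * (f z / (D * (1 + a * dist x z) ^ E)) := by
          have := hg0 z
          rw [mem_ball, dist_comm] at hz
          gcongr
  calc ∫⁻ z in ball x R, ENNReal.ofReal (f z) ∂μ
      ≤ ENNReal.ofReal (D * (1 + a * R) ^ E) *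
          ∫⁻ z in ball x R, ENNReal.ofReal (f z / (D * (1 + a * dist x z) ^ E)) ∂μ :=
        setLIntegral_ofReal_le_mul hint.aemeasurable.restrict (by positivity) hpointwise
    _ ≤ ENNReal.ofReal (D * (1 + a * R) ^ E) *
          ∫⁻ z, ENNReal.ofReal (f z / (D * (1 + a * dist x z) ^ E)) ∂μ := by
        gcongr
        exact Measure.restrict_le_self
    _ < ⊤ := ENNReal.mul_lt_top ENNReal.ofReal_lt_top
        ((hasFiniteIntegral_iff_ofReal (ae_of_all _ hg0)).1 hint.2)

lemma setLIntegral_ofReal_le_of_subset_ball {f g : M → ℝ} {A : ℝ} (hf : Measurable f)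
    (hball : ∀ R : ℝ, 0 < R →
      ∫⁻ z in ball x R, ENNReal.ofReal (f z) ∂μ ≤ ENNReal.ofReal ((μ (ball x R)).toReal * A))
    {s : Set M} {R K : ℝ} (hR : 0 < R) (hK : 0 ≤ K) (hs : s ⊆ ball x R)
    (hgf : ∀ z ∈ s, g z ≤ K * f z) :
    ∫⁻ z in s, ENNReal.ofReal (g z) ∂μ ≤ ENNReal.ofReal (K * ((μ (ball x R)).toReal * A)) :=
  calc ∫⁻ z in s, ENNReal.ofReal (g z) ∂μ
      ≤ ENNReal.ofReal K * ∫⁻ z in s, ENNReal.ofReal (f z) ∂μ :=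
        setLIntegral_ofReal_le_mul hf.aemeasurable hK hgf
    _ ≤ ENNReal.ofReal K * ∫⁻ z in ball x R, ENNReal.ofReal (f z) ∂μ := by gcongr
    _ ≤ ENNReal.ofReal K * ENNReal.ofReal ((μ (ball x R)).toReal * A) := by
        gcongr
        exact hball R hR
    _ = ENNReal.ofReal (K * ((μ (ball x R)).toReal * A)) := (ENNReal.ofReal_mul hK).symm

theorem lintegral_div_weight_le {f : M → ℝ} (hf : Measurable f) (hf0 : ∀ z, 0 ≤ f z)
    {A c₀ a E : ℝ} (hA : 0 ≤ A) (hc₀ : 0 ≤ c₀) (ha : 0 < a) (hE : 0 ≤ E) (hq : c₀ < 2 ^ E)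
    (hdbl : ∀ r : ℝ, 0 < r → (μ (ball x (2 * r))).toReal ≤ c₀ * (μ (ball x r)).toReal)
    (hD : 0 < (μ (ball x a⁻¹)).toReal)
    (hball : ∀ R : ℝ, 0 < R →
      ∫⁻ z in ball x R, ENNReal.ofReal (f z) ∂μ ≤ ENNReal.ofReal ((μ (ball x R)).toReal * A)) :
    ∫⁻ z, ENNReal.ofReal (f z / ((μ (ball x a⁻¹)).toReal * (1 + a * dist x z) ^ E)) ∂μ ≤
      ENNReal.ofReal ((1 + c₀ / (1 - c₀ / 2 ^ E)) * A) := by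
  set D := (μ (ball x a⁻¹)).toReal
  set g := fun z => f z / (D * (1 + a * dist x z) ^ E)
  have hcentral : ∫⁻ z in ball x a⁻¹, ENNReal.ofReal (g z) ∂μ ≤ ENNReal.ofReal A := by
    calc ∫⁻ z in ball x a⁻¹, ENNReal.ofReal (g z) ∂μ ≤ ENNReal.ofReal ((D * 1)⁻¹ * (D * A)) :=
          setLIntegral_ofReal_le_of_subset_ball hf hball (inv_pos.2 ha) (by positivity) subset_rfl
            fun z _ => pow_zero ((2 : ℝ) ^ E) ▸ div_mul_rpow_le_of_two_pow_le (hf0 z) hD hE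
              (by rw [pow_zero]; exact le_add_of_nonneg_right (by positivity))
      _ = ENNReal.ofReal A := by rw [mul_one, inv_mul_cancel_left₀ hD.ne']
  have hannulus : ∀ m : ℕ, ∫⁻ z in ball x (2 ^ (m + 1) * a⁻¹) \ ball x (2 ^ m * a⁻¹),
      ENNReal.ofReal (g z) ∂μ ≤ ENNReal.ofReal (c₀ * (c₀ / 2 ^ E) ^ m * A) := fun m => by
    calc _ ≤ ENNReal.ofReal ((D * (2 ^ E) ^ m)⁻¹ *
            ((μ (ball x (2 ^ (m + 1) * a⁻¹))).toReal * A)) :=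
          setLIntegral_ofReal_le_of_subset_ball hf hball (by positivity) (by positivity)
            sdiff_subset fun z hz => div_mul_rpow_le_of_two_pow_le (hf0 z) hD hE
              (two_pow_le_one_add_mul_dist ha hz.2)
      _ ≤ ENNReal.ofReal ((D * (2 ^ E) ^ m)⁻¹ * (c₀ ^ (m + 1) * D * A)) := by
          gcongr
          exact toReal_measure_ball_two_pow_mul_le hc₀ hdbl _ (by positivity)
      _ = ENNReal.ofReal (c₀ * (c₀ / 2 ^ E) ^ m * A) := by
          rw [div_pow, pow_succ]
          congr 1
          field_simp
  calc ∫⁻ z, ENNReal.ofReal (g z) ∂μ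
      ≤ ENNReal.ofReal A + ∑' m : ℕ, ENNReal.ofReal (c₀ * (c₀ / 2 ^ E) ^ m * A) :=
        (lintegral_le_ball_add_tsum_annulus _ (inv_pos.2 ha)).trans
          (add_le_add hcentral (ENNReal.tsum_le_tsum hannulus))
    _ = _ := ofReal_add_tsum_geometric_eq hc₀ (by positivity) ((div_lt_one (by positivity)).2 hq) hA

end MetricMeasure

theorem weighted_integral_le_maximal_general {M : Type*} [MetricSpace M] [MeasurableSpace M]
    (μ : Measure M) (c₀ : ℝ) (hc₀ : 1 < c₀)
    (hpos : ∀ (x : M) (r : ℝ), 0 < r → 0 < μ (ball x r))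
    (hfin : ∀ (x : M) (r : ℝ), 0 < r → μ (ball x r) < ⊤)
    (hdbl : ∀ (x : M) (r : ℝ), 0 < r →
      (μ (ball x (2 * r))).toReal ≤ c₀ * (μ (ball x r)).toReal)
    (θ γ : ℝ) (hθ0 : 0 < θ)
    (hγ : 2 * Real.logb 2 c₀ / θ < γ) :
    ∃ c > 0, ∀ (F MF : M → ℝ), Measurable F → (∀ y, 0 ≤ F y) →
      ∀ (x : M) (j : ℤ),
      (∀ (z : M) (r : ℝ), 0 < r → x ∈ ball z r →
        (∫ y in ball z r, F y ^ θ ∂μ) ≤ (μ (ball z r)).toReal * MF x ^ θ) →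
      (∫ z, F z ^ θ /
          ((μ (ball x ((2 : ℝ) ^ (-j)))).toReal *
            (1 + (2 : ℝ) ^ j * dist x z) ^ (γ * θ - Real.logb 2 c₀)) ∂μ) ≤
        c * MF x ^ θ := by
  set d := Real.logb 2 c₀
  have hγθ : 2 * d < γ * θ := (div_lt_iff₀ hθ0).1 hγ
  have hE : 0 ≤ γ * θ - d := by linarith [Real.logb_pos one_lt_two hc₀]
  have hq : c₀ < 2 ^ (γ * θ - d) := lt_two_rpow_sub_logb (by linarith) hγθ
  have hq₁ : 0 < 1 - c₀ / 2 ^ (γ * θ - d) := sub_pos.2 ((div_lt_one (by positivity)).2 hq)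
  refine ⟨1 + c₀ / (1 - c₀ / 2 ^ (γ * θ - d)), by positivity, ?_⟩
  intro F MF hF hF0 x j hMF
  have hFθ0 : ∀ z, 0 ≤ F z ^ θ := fun z => Real.rpow_nonneg (hF0 z) θ
  have hμball : ∀ R : ℝ, 0 < R → 0 < (μ (ball x R)).toReal := fun R hR =>
    ENNReal.toReal_pos (hpos x R hR).ne' (hfin x R hR).ne
  have hA : 0 ≤ MF x ^ θ := nonneg_of_mul_nonneg_right
    ((integral_nonneg hFθ0).trans (hMF x 1 one_pos (mem_ball_self one_pos))) (hμball 1 one_pos)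
  have ha : (0 : ℝ) < 2 ^ j := zpow_pos two_pos j
  rw [zpow_neg]
  by_cases hint : Integrable (fun z => F z ^ θ / ((μ (ball x ((2 : ℝ) ^ j)⁻¹)).toReal *
      (1 + (2 : ℝ) ^ j * dist x z) ^ (γ * θ - d))) μ
  · rw [integral_eq_lintegral_of_nonneg_ae (ae_of_all _ fun z => by have := hFθ0 z; positivity)
      hint.aestronglyMeasurable]
    refine ENNReal.toReal_le_of_le_ofReal (by positivity) <|
      lintegral_div_weight_le (hF.pow_const θ) hFθ0 hA (by linarith) ha hE hq
        (hdbl x) (hμball _ (inv_pos.2 ha)) fun R hR => ?_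
    rw [← ofReal_integral_eq_lintegral_ofReal (integrableOn_ball_of_integrable_div_weight
      (hF.pow_const θ) hFθ0 (hμball _ (inv_pos.2 ha)) ha.le hE hint hR.le)
      (ae_of_all _ hFθ0)]
    exact ENNReal.ofReal_le_ofReal (hMF x R hR (mem_ball_self hR))
  · rw [integral_undef hint]
    positivity

theorem weighted_integral_le_maximal {M : Type*} [MetricSpace M] [MeasurableSpace M]
    (μ : Measure M) (c₀ : ℝ) (hc₀ : 1 < c₀)
    (hpos : ∀ (x : M) (r : ℝ), 0 < r → 0 < μ (ball x r))
    (hfin : ∀ (x : M) (r : ℝ), 0 < r → μ (ball x r) < ⊤)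
    (hdbl : ∀ (x : M) (r : ℝ), 0 < r →
      (μ (ball x (2 * r))).toReal ≤ c₀ * (μ (ball x r)).toReal)
    (θ γ : ℝ) (hθ0 : 0 < θ) (hθ1 : θ ≤ 1)
    (hγ : 2 * Real.logb 2 c₀ / θ < γ) :
    ∃ c > 0, ∀ (F MF : M → ℝ), Measurable F → (∀ y, 0 ≤ F y) →
      ∀ (x : M) (j : ℤ),
      (∀ (z : M) (r : ℝ), 0 < r → x ∈ ball z r →
        (∫ y in ball z r, F y ^ θ ∂μ) ≤ (μ (ball z r)).toReal * MF x ^ θ) →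
      (∫ z, F z ^ θ /
          ((μ (ball x ((2 : ℝ) ^ (-j)))).toReal *
            (1 + (2 : ℝ) ^ j * dist x z) ^ (γ * θ - Real.logb 2 c₀)) ∂μ) ≤
        c * MF x ^ θ :=
  weighted_integral_le_maximal_general μ c₀ hc₀ hpos hfin hdbl θ γ hθ0 hγ
end

section
/- Let (M, ρ, μ) be a doubling metric measure space and let x₀ ∈ M be fixed. Suppose {K_j}_{j≥1} are measurable kernels on M × M satisfying |K_j(x,y)| ≤ c 2^{-jA} μ(B(x,1))^{-1} (1 + ρ(x,y))^{-σ-d} for constants c, A > 0 and σ > d, and let φ : M → ℂ satisfy |φ(y)| ≤ C (1 + ρ(y, x₀))^{-σ-d}. Then there is a constant c' > 0 such that for all j ≥ 1 and x ∈ M, |∫_M K_j(x,y) φ(y) dμ(y)| ≤ c' C 2^{-jA} (1 + ρ(x, x₀))^{-σ}. -/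
open MeasureTheory Metric Set

/-!
Split `(1 + ρ(x,u))^{-s} (1 + ρ(u,x₀))^{-s}` according to which of the two distances is at least
`ρ(x,x₀)/2`: the product is at most `2^s (1 + ρ(x,x₀))^{-s}` times the sum of the two factors.
Each factor integrates to `O(μ(B(z,1)))` over its centre `z`, by summing over the dyadic balls
`B(z, 2^{k+1})` whose measures grow like `c₀^k = 2^{kd}` while the weight decays like `2^{-ks}`.
Finally `μ(B(x₀,1)) ≤ c₀ (1 + ρ(x,x₀))^d μ(B(x,1))`, and this factor `(1 + ρ(x,x₀))^d` is
what turns the decay exponent `s = σ + d` into `σ`.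
-/

open scoped ENNReal

theorem one_add_rpow_neg_le_two_rpow_mul {a t s : ℝ} (ht : 0 ≤ t) (hs : 0 ≤ s)
    (hta : t ≤ 2 * a) : (1 + a) ^ (-s) ≤ 2 ^ s * (1 + t) ^ (-s) :=
  calc (1 + a) ^ (-s) ≤ ((1 + t) / 2) ^ (-s) :=
        Real.rpow_le_rpow_of_nonpos (by positivity) (by linarith) (by linarith)
    _ = 2 ^ s * (1 + t) ^ (-s) := by
        rw [Real.div_rpow (by positivity) zero_le_two, Real.rpow_neg zero_le_two, div_inv_eq_mul,
          mul_comm]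

theorem one_add_rpow_neg_mul_one_add_rpow_neg_le {a b t s : ℝ} (ha : 0 ≤ a) (hb : 0 ≤ b)
    (ht : 0 ≤ t) (hs : 0 ≤ s) (ht_le : t ≤ a + b) :
    (1 + a) ^ (-s) * (1 + b) ^ (-s) ≤
      2 ^ s * (1 + t) ^ (-s) * ((1 + a) ^ (-s) + (1 + b) ^ (-s)) := by
  have hfa : 0 ≤ (1 + a) ^ (-s) := by positivity
  have hfb : 0 ≤ (1 + b) ^ (-s) := by positivity
  rcases le_total b a with hba | hab
  · calc (1 + a) ^ (-s) * (1 + b) ^ (-s) ≤ 2 ^ s * (1 + t) ^ (-s) * (1 + b) ^ (-s) :=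
          mul_le_mul_of_nonneg_right (one_add_rpow_neg_le_two_rpow_mul ht hs (by linarith)) hfb
      _ ≤ _ := by gcongr; exact le_add_of_nonneg_left hfa
  · calc (1 + a) ^ (-s) * (1 + b) ^ (-s) ≤ 2 ^ s * (1 + t) ^ (-s) * (1 + a) ^ (-s) := by
          rw [mul_comm]
          exact mul_le_mul_of_nonneg_right
            (one_add_rpow_neg_le_two_rpow_mul ht hs (by linarith)) hfa
      _ ≤ _ := by gcongr; exact le_add_of_nonneg_right hfb

section

variable {M : Type*} [MetricSpace M] [MeasurableSpace M]

def IsDoublingWith (μ : Measure M) (c₀ : ℝ) : Prop :=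
  ∀ (x : M) (r : ℝ), 0 < r → (μ (ball x (2 * r))).toReal ≤ c₀ * (μ (ball x r)).toReal

/-- `M` carries no Borel structure, so `y ↦ dist z y` need not be measurable and `∫⁻` is not
additive on the integrands below; they are bounded by this measurable function instead, built
from measurable hulls of the dyadic balls. -/
noncomputable def dyadicMajorant (μ : Measure M) (z : M) (s : ℝ) (y : M) : ℝ≥0∞ :=
  ∑' k : ℕ, (toMeasurable μ (ball z (2 ^ (k + 1)))).indicator
    (fun _ => ENNReal.ofReal (((2 : ℝ) ^ (-s)) ^ k)) y

theorem measurable_dyadicMajorant (μ : Measure M) (z : M) (s : ℝ) :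
    Measurable (dyadicMajorant μ z s) :=
  Measurable.tsum fun _ => measurable_const.indicator (measurableSet_toMeasurable μ _)

theorem ofReal_one_add_dist_rpow_neg_le_dyadicMajorant (μ : Measure M) {s : ℝ} (hs : 0 ≤ s)
    (z y : M) : ENNReal.ofReal ((1 + dist z y) ^ (-s)) ≤ dyadicMajorant μ z s y := by
  obtain ⟨k, hk_le, hk_lt⟩ :=
    exists_nat_pow_near (le_add_of_nonneg_right dist_nonneg : 1 ≤ 1 + dist z y) one_lt_two
  have hy : y ∈ toMeasurable μ (ball z (2 ^ (k + 1))) :=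
    subset_toMeasurable μ _ (by rw [mem_ball, dist_comm]; linarith)
  calc ENNReal.ofReal ((1 + dist z y) ^ (-s)) ≤ ENNReal.ofReal (((2 : ℝ) ^ (-s)) ^ k) := by
        rw [Real.rpow_pow_comm zero_le_two]
        exact ENNReal.ofReal_le_ofReal
          (Real.rpow_le_rpow_of_nonpos (by positivity) hk_le (neg_nonpos.mpr hs))
    _ = (toMeasurable μ (ball z (2 ^ (k + 1)))).indicator
          (fun _ => ENNReal.ofReal (((2 : ℝ) ^ (-s)) ^ k)) y := by rw [indicator_of_mem hy]
    _ ≤ dyadicMajorant μ z s y := ENNReal.le_tsum k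

theorem ofReal_one_add_dist_rpow_neg_mul_le_dyadicMajorant (μ : Measure M) {s : ℝ} (hs : 0 ≤ s)
    (x y u : M) :
    ENNReal.ofReal ((1 + dist x u) ^ (-s) * (1 + dist u y) ^ (-s)) ≤
      ENNReal.ofReal (2 ^ s * (1 + dist x y) ^ (-s)) *
        (dyadicMajorant μ x s u + dyadicMajorant μ y s u) :=
  calc ENNReal.ofReal ((1 + dist x u) ^ (-s) * (1 + dist u y) ^ (-s))
      ≤ ENNReal.ofReal (2 ^ s * (1 + dist x y) ^ (-s) *
          ((1 + dist x u) ^ (-s) + (1 + dist y u) ^ (-s))) := by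
        rw [dist_comm y u]
        exact ENNReal.ofReal_le_ofReal (one_add_rpow_neg_mul_one_add_rpow_neg_le dist_nonneg
          dist_nonneg dist_nonneg hs (dist_triangle x u y))
    _ = ENNReal.ofReal (2 ^ s * (1 + dist x y) ^ (-s)) *
          (ENNReal.ofReal ((1 + dist x u) ^ (-s)) + ENNReal.ofReal ((1 + dist y u) ^ (-s))) := by
        rw [ENNReal.ofReal_mul (by positivity), ENNReal.ofReal_add (by positivity) (by positivity)]
    _ ≤ _ := by gcongr <;> exact ofReal_one_add_dist_rpow_neg_le_dyadicMajorant μ hs _ _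

namespace IsDoublingWith

variable {μ : Measure M} {c₀ : ℝ}

theorem measure_ball_two_pow_mul_le (h : IsDoublingWith μ c₀) (hc₀ : 0 ≤ c₀) (x : M) {r : ℝ}
    (hr : 0 < r) (k : ℕ) : (μ (ball x (2 ^ k * r))).toReal ≤ c₀ ^ k * (μ (ball x r)).toReal := by
  induction k with
  | zero => simp
  | succ k ih =>
    calc (μ (ball x (2 ^ (k + 1) * r))).toReal = (μ (ball x (2 * (2 ^ k * r)))).toReal := by
          ring_nf
      _ ≤ c₀ * (μ (ball x (2 ^ k * r))).toReal := h x _ (by positivity)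
      _ ≤ c₀ * (c₀ ^ k * (μ (ball x r)).toReal) := by gcongr
      _ = c₀ ^ (k + 1) * (μ (ball x r)).toReal := by ring

theorem measure_ball_one_le (h : IsDoublingWith μ c₀) (hc₀ : 1 ≤ c₀)
    (hfin : ∀ (x : M) (r : ℝ), 0 < r → μ (ball x r) < ⊤) (x y : M) :
    (μ (ball y 1)).toReal ≤ c₀ * (1 + dist x y) ^ Real.logb 2 c₀ * (μ (ball x 1)).toReal := by
  obtain ⟨k, hk_le, hk_lt⟩ :=
    exists_nat_pow_near (le_add_of_nonneg_right dist_nonneg : 1 ≤ 1 + dist x y) one_lt_two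
  have hsub : ball y 1 ⊆ ball x (2 ^ (k + 1) * 1) := by
    intro z hz
    rw [mem_ball] at hz ⊢
    calc dist z x ≤ dist z y + dist y x := dist_triangle _ _ _
      _ < 2 ^ (k + 1) * 1 := by rw [dist_comm y x]; linarith
  have hpow : c₀ ^ k ≤ (1 + dist x y) ^ Real.logb 2 c₀ := by
    calc c₀ ^ k = ((2 : ℝ) ^ Real.logb 2 c₀) ^ k := by
          rw [Real.rpow_logb two_pos (by norm_num) (by linarith)]
      _ = ((2 : ℝ) ^ k) ^ Real.logb 2 c₀ := Real.rpow_pow_comm zero_le_two _ _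
      _ ≤ (1 + dist x y) ^ Real.logb 2 c₀ :=
          Real.rpow_le_rpow (by positivity) hk_le (Real.logb_nonneg one_lt_two hc₀)
  calc (μ (ball y 1)).toReal ≤ (μ (ball x (2 ^ (k + 1) * 1))).toReal :=
        ENNReal.toReal_mono (hfin x _ (by positivity)).ne (measure_mono hsub)
    _ ≤ c₀ ^ (k + 1) * (μ (ball x 1)).toReal :=
        h.measure_ball_two_pow_mul_le (by linarith) x one_pos (k + 1)
    _ = c₀ * c₀ ^ k * (μ (ball x 1)).toReal := by ring
    _ ≤ c₀ * (1 + dist x y) ^ Real.logb 2 c₀ * (μ (ball x 1)).toReal := by gcongr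

theorem lintegral_dyadicMajorant_le (h : IsDoublingWith μ c₀) (hc₀ : 0 ≤ c₀)
    (hfin : ∀ (x : M) (r : ℝ), 0 < r → μ (ball x r) < ⊤) (z : M) {s : ℝ}
    (hs : c₀ * 2 ^ (-s) < 1) :
    ∫⁻ y, dyadicMajorant μ z s y ∂μ ≤
      ENNReal.ofReal (c₀ / (1 - c₀ * 2 ^ (-s)) * (μ (ball z 1)).toReal) := by
  set V := (μ (ball z 1)).toReal
  set q := c₀ * (2 : ℝ) ^ (-s)
  have hq : 0 ≤ q := by positivity
  have hterm : ∀ k : ℕ, ENNReal.ofReal (((2 : ℝ) ^ (-s)) ^ k) * μ (ball z (2 ^ (k + 1))) ≤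
      ENNReal.ofReal (c₀ * V * q ^ k) := by
    intro k
    rw [← ENNReal.ofReal_toReal (hfin z _ (by positivity)).ne, ← ENNReal.ofReal_mul (by positivity)]
    apply ENNReal.ofReal_le_ofReal
    have hball := h.measure_ball_two_pow_mul_le hc₀ z one_pos (k + 1)
    rw [mul_one] at hball
    calc ((2 : ℝ) ^ (-s)) ^ k * (μ (ball z (2 ^ (k + 1)))).toReal
        ≤ ((2 : ℝ) ^ (-s)) ^ k * (c₀ ^ (k + 1) * V) := by gcongr
      _ = c₀ * V * q ^ k := by rw [mul_pow]; ring
  calc ∫⁻ y, dyadicMajorant μ z s y ∂μ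
      = ∑' k : ℕ, ENNReal.ofReal (((2 : ℝ) ^ (-s)) ^ k) * μ (ball z (2 ^ (k + 1))) := by
        simp only [dyadicMajorant]
        rw [lintegral_tsum fun _ =>
          (measurable_const.indicator (measurableSet_toMeasurable μ _)).aemeasurable]
        simp only [lintegral_indicator_const (measurableSet_toMeasurable μ _), measure_toMeasurable]
    _ ≤ ∑' k : ℕ, ENNReal.ofReal (c₀ * V * q ^ k) := ENNReal.tsum_le_tsum hterm
    _ = ENNReal.ofReal (∑' k : ℕ, c₀ * V * q ^ k) :=
        (ENNReal.ofReal_tsum_of_nonneg (fun _ => by positivity)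
          ((summable_geometric_of_lt_one hq hs).mul_left _)).symm
    _ = ENNReal.ofReal (c₀ / (1 - q) * V) := by
        rw [tsum_mul_left, tsum_geometric_of_lt_one hq hs]
        congr 1; ring

theorem lintegral_one_add_dist_rpow_neg_mul_le (h : IsDoublingWith μ c₀) (hc₀ : 0 ≤ c₀)
    (hfin : ∀ (x : M) (r : ℝ), 0 < r → μ (ball x r) < ⊤) {s : ℝ} (hs₀ : 0 ≤ s)
    (hs : c₀ * 2 ^ (-s) < 1) (x y : M) :
    ∫⁻ u, ENNReal.ofReal ((1 + dist x u) ^ (-s) * (1 + dist u y) ^ (-s)) ∂μ ≤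
      ENNReal.ofReal (2 ^ s * (1 + dist x y) ^ (-s) * (c₀ / (1 - c₀ * 2 ^ (-s))) *
        ((μ (ball x 1)).toReal + (μ (ball y 1)).toReal)) := by
  set a := 2 ^ s * (1 + dist x y) ^ (-s)
  set B := c₀ / (1 - c₀ * 2 ^ (-s))
  have hB : 0 ≤ B := div_nonneg hc₀ (by linarith)
  calc ∫⁻ u, ENNReal.ofReal ((1 + dist x u) ^ (-s) * (1 + dist u y) ^ (-s)) ∂μ
      ≤ ∫⁻ u, ENNReal.ofReal a * (dyadicMajorant μ x s u + dyadicMajorant μ y s u) ∂μ :=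
        lintegral_mono fun u => ofReal_one_add_dist_rpow_neg_mul_le_dyadicMajorant μ hs₀ x y u
    _ = ENNReal.ofReal a *
          (∫⁻ u, dyadicMajorant μ x s u ∂μ + ∫⁻ u, dyadicMajorant μ y s u ∂μ) := by
        rw [lintegral_const_mul' _ _ ENNReal.ofReal_ne_top,
          lintegral_add_left (measurable_dyadicMajorant μ x s)]
    _ ≤ ENNReal.ofReal a *
          (ENNReal.ofReal (B * (μ (ball x 1)).toReal) +
            ENNReal.ofReal (B * (μ (ball y 1)).toReal)) := by
        gcongr <;> exact h.lintegral_dyadicMajorant_le hc₀ hfin _ hs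
    _ = ENNReal.ofReal (a * B * ((μ (ball x 1)).toReal + (μ (ball y 1)).toReal)) := by
        rw [← ENNReal.ofReal_add (by positivity) (by positivity),
          ← ENNReal.ofReal_mul (by positivity)]
        congr 1; ring

theorem exists_lintegral_one_add_dist_rpow_neg_mul_le (h : IsDoublingWith μ c₀) (hc₀ : 1 ≤ c₀)
    (hfin : ∀ (x : M) (r : ℝ), 0 < r → μ (ball x r) < ⊤) {σ : ℝ} (hσ : Real.logb 2 c₀ < σ) :
    ∃ C > 0, ∀ x y : M,
      ∫⁻ u, ENNReal.ofReal ((1 + dist x u) ^ (-(σ + Real.logb 2 c₀)) *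
        (1 + dist u y) ^ (-(σ + Real.logb 2 c₀))) ∂μ ≤
      ENNReal.ofReal (C * (μ (ball x 1)).toReal * (1 + dist x y) ^ (-σ)) := by
  set d := Real.logb 2 c₀
  set s := σ + d with hs_def
  have hd : 0 ≤ d := Real.logb_nonneg one_lt_two hc₀
  have hratio : c₀ * 2 ^ (-s) = 2 ^ (-σ) := by
    rw [neg_add, Real.rpow_add two_pos, Real.rpow_neg zero_le_two d,
      Real.rpow_logb two_pos (by norm_num) (by linarith)]
    field_simp
  have hratio_lt : c₀ * 2 ^ (-s) < 1 := by
    rw [hratio]; exact Real.rpow_lt_one_of_one_lt_of_neg one_lt_two (by linarith)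
  set B := c₀ / (1 - c₀ * 2 ^ (-s))
  have hB : 0 < B := div_pos (by linarith) (by linarith)
  refine ⟨2 ^ s * B * (1 + c₀), by positivity, fun x y => ?_⟩
  refine (h.lintegral_one_add_dist_rpow_neg_mul_le (by linarith) hfin (by linarith) hratio_lt
    x y).trans (ENNReal.ofReal_le_ofReal ?_)
  set t := dist x y
  set Vx := (μ (ball x 1)).toReal
  have hvol : (μ (ball y 1)).toReal ≤ c₀ * (1 + t) ^ d * Vx := h.measure_ball_one_le hc₀ hfin x y
  have hdecay : (1 + t) ^ (-s) ≤ (1 + t) ^ (-σ) :=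
    Real.rpow_le_rpow_of_exponent_le (by linarith [dist_nonneg (x := x) (y := y)]) (by linarith)
  have hexp : (1 + t) ^ (-s) * (1 + t) ^ d = (1 + t) ^ (-σ) := by
    rw [← Real.rpow_add (by positivity), hs_def]; ring_nf
  calc 2 ^ s * (1 + t) ^ (-s) * B * (Vx + (μ (ball y 1)).toReal)
      = 2 ^ s * B * ((1 + t) ^ (-s) * Vx + (1 + t) ^ (-s) * (μ (ball y 1)).toReal) := by ring
    _ ≤ 2 ^ s * B * ((1 + t) ^ (-σ) * Vx + (1 + t) ^ (-s) * (c₀ * (1 + t) ^ d * Vx)) := by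
        gcongr
    _ = 2 ^ s * B * (1 + c₀) * Vx * (1 + t) ^ (-σ) := by
        linear_combination 2 ^ s * B * c₀ * Vx * hexp

end IsDoublingWith

end

theorem kernel_integral_decay_general {M : Type*} [MetricSpace M] [MeasurableSpace M]
    (μ : Measure M) (c₀ : ℝ) (hc₀ : 1 < c₀)
    (hpos : ∀ (x : M) (r : ℝ), 0 < r → 0 < μ (ball x r))
    (hfin : ∀ (x : M) (r : ℝ), 0 < r → μ (ball x r) < ⊤)
    (hdbl : ∀ (x : M) (r : ℝ), 0 < r →
      (μ (ball x (2 * r))).toReal ≤ c₀ * (μ (ball x r)).toReal)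
    (x₀ : M) (c A σ : ℝ) (hc : 0 < c)
    (hσ : Real.logb 2 c₀ < σ) :
    ∃ c' > 0, ∀ (K : ℕ → M → M → ℂ) (φ : M → ℂ) (C : ℝ), 0 ≤ C →
      (∀ (j : ℕ) (x y : M), ‖K j x y‖ ≤ c * (2 : ℝ) ^ (-(j : ℝ) * A) *
        ((μ (ball x 1)).toReal)⁻¹ * (1 + dist x y) ^ (-(σ + Real.logb 2 c₀))) →
      (∀ y : M, ‖φ y‖ ≤ C * (1 + dist y x₀) ^ (-(σ + Real.logb 2 c₀))) →
      ∀ (j : ℕ), 1 ≤ j → ∀ x : M,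
        ‖∫ y, K j x y * φ y ∂μ‖ ≤
          c' * C * (2 : ℝ) ^ (-(j : ℝ) * A) * (1 + dist x x₀) ^ (-σ) := by
  obtain ⟨C₁, hC₁, hconv⟩ :=
    IsDoublingWith.exists_lintegral_one_add_dist_rpow_neg_mul_le hdbl hc₀.le hfin hσ
  refine ⟨c * C₁, by positivity, fun K φ C hC hK hφ j _ x => ?_⟩
  set s := σ + Real.logb 2 c₀
  set V := (μ (ball x 1)).toReal
  have hV : 0 < V := ENNReal.toReal_pos (hpos x 1 one_pos).ne' (hfin x 1 one_pos).ne
  set a := c * (2 : ℝ) ^ (-(j : ℝ) * A) * V⁻¹ * C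
  have ha : 0 ≤ a := by positivity
  have hpt : ∀ y, ENNReal.ofReal ‖K j x y * φ y‖ ≤
      ENNReal.ofReal a * ENNReal.ofReal ((1 + dist x y) ^ (-s) * (1 + dist y x₀) ^ (-s)) := by
    intro y
    rw [← ENNReal.ofReal_mul ha, norm_mul]
    refine ENNReal.ofReal_le_ofReal ((mul_le_mul (hK j x y) (hφ y) (norm_nonneg _)
      (by positivity)).trans_eq ?_)
    ring
  have hlint : ∫⁻ y, ENNReal.ofReal ‖K j x y * φ y‖ ∂μ ≤
      ENNReal.ofReal (c * C₁ * C * (2 : ℝ) ^ (-(j : ℝ) * A) * (1 + dist x x₀) ^ (-σ)) :=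
    calc ∫⁻ y, ENNReal.ofReal ‖K j x y * φ y‖ ∂μ
        ≤ ENNReal.ofReal a *
            ∫⁻ y, ENNReal.ofReal ((1 + dist x y) ^ (-s) * (1 + dist y x₀) ^ (-s)) ∂μ := by
          rw [← lintegral_const_mul' _ _ ENNReal.ofReal_ne_top]; exact lintegral_mono hpt
      _ ≤ ENNReal.ofReal a * ENNReal.ofReal (C₁ * V * (1 + dist x x₀) ^ (-σ)) := by
          gcongr; exact hconv x x₀
      _ = _ := by rw [← ENNReal.ofReal_mul ha]; congr 1; simp only [a]; field_simp
  exact (norm_integral_le_lintegral_norm _).trans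
    (ENNReal.toReal_le_of_le_ofReal (by positivity) hlint)

theorem kernel_integral_decay {M : Type*} [MetricSpace M] [MeasurableSpace M]
    (μ : Measure M) (c₀ : ℝ) (hc₀ : 1 < c₀)
    (hpos : ∀ (x : M) (r : ℝ), 0 < r → 0 < μ (ball x r))
    (hfin : ∀ (x : M) (r : ℝ), 0 < r → μ (ball x r) < ⊤)
    (hdbl : ∀ (x : M) (r : ℝ), 0 < r →
      (μ (ball x (2 * r))).toReal ≤ c₀ * (μ (ball x r)).toReal)
    (x₀ : M) (c A σ : ℝ) (hc : 0 < c) (hA : 0 < A)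
    (hσ : Real.logb 2 c₀ < σ) :
    ∃ c' > 0, ∀ (K : ℕ → M → M → ℂ) (φ : M → ℂ) (C : ℝ), 0 ≤ C →
      (∀ (j : ℕ) (x y : M), ‖K j x y‖ ≤ c * (2 : ℝ) ^ (-(j : ℝ) * A) *
        ((μ (ball x 1)).toReal)⁻¹ * (1 + dist x y) ^ (-(σ + Real.logb 2 c₀))) →
      (∀ y : M, ‖φ y‖ ≤ C * (1 + dist y x₀) ^ (-(σ + Real.logb 2 c₀))) →
      ∀ (j : ℕ), 1 ≤ j → ∀ x : M,
        ‖∫ y, K j x y * φ y ∂μ‖ ≤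
          c' * C * (2 : ℝ) ^ (-(j : ℝ) * A) * (1 + dist x x₀) ^ (-σ) :=
  kernel_integral_decay_general μ c₀ hc₀ hpos hfin hdbl x₀ c A σ hc hσ
end
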